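/- arXiv:2603.29720 — 2 statements merged into one kernel-verified Lean document; each statement's English description precedes it below -/
import Mathlib

section
/- Let (X,T) be a topological dynamical system and let μ be a T-invariant Borel probability measure on X. For all measurable partitions of unity Φ, Ψ, Φ₁, Φ₂, Ψ₁, Ψ₂ on X the following hold: (i) H̃_μ(Φ ∨ Ψ) = H̃_μ(Ψ) + H̃_μ(Φ | Ψ); (ii) H̃_μ(Φ₁ ∨ Φ₂ | Ψ) = H̃_μ(Φ₁ | Ψ) + H̃_μ(Φ₂ | Φ₁ ∨ Ψ); (iii) H̃_μ(Φ | Ψ₁ ∨ Ψ₂) ≤ H̃_μ(Φ | Ψ₁); (iv) H̃_μ(Φ) ≥ 0 and H̃_μ(Φ | Ψ) ≥ 0. -/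
open MeasureTheory Filter Set

/-! ### Partitions of unity -/

/-- A finite partition of unity on `X`: a finite family of functions `X → [0,1]`
summing to `1` everywhere. -/
structure PartUnity (X : Type*) where
  n : ℕ
  f : Fin n → X → ℝ
  nonneg : ∀ i x, 0 ≤ f i x
  le_one : ∀ i x, f i x ≤ 1
  sum_one : ∀ x, ∑ i, f i x = 1

namespace PartUnity

variable {X Y : Type*}

/-- A continuous partition of unity. -/
def Cont [TopologicalSpace X] (Φ : PartUnity X) : Prop := ∀ i, Continuous (Φ.f i)

/-- A measurable partition of unity. -/
def Meas [MeasurableSpace X] (Φ : PartUnity X) : Prop := ∀ i, Measurable (Φ.f i)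

/-- A positive partition of unity. -/
def Pos (Φ : PartUnity X) : Prop := ∀ i x, 0 < Φ.f i x

/-- The join `Φ ∨ Ψ = {φ·ψ : φ ∈ Φ, ψ ∈ Ψ}` of two partitions of unity. -/
def join (Φ Ψ : PartUnity X) : PartUnity X where
  n := Φ.n * Ψ.n
  f k x := Φ.f (finProdFinEquiv.symm k).1 x * Ψ.f (finProdFinEquiv.symm k).2 x
  nonneg k x := mul_nonneg (Φ.nonneg _ x) (Ψ.nonneg _ x)
  le_one k x := mul_le_one₀ (Φ.le_one _ x) (Ψ.nonneg _ x) (Ψ.le_one _ x)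
  sum_one x := by
    rw [← Equiv.sum_comp (finProdFinEquiv : Fin Φ.n × Fin Ψ.n ≃ Fin (Φ.n * Ψ.n))
      (fun k => Φ.f (finProdFinEquiv.symm k).1 x * Ψ.f (finProdFinEquiv.symm k).2 x)]
    simp only [Equiv.symm_apply_apply]
    rw [Fintype.sum_prod_type]
    dsimp only
    rw [← Finset.sum_mul_sum, Φ.sum_one x, Ψ.sum_one x, one_mul]

/-- Pull back a partition of unity by a map: `TΦ = {φ ∘ T : φ ∈ Φ}`. -/
def comp (Φ : PartUnity X) (T : Y → X) : PartUnity Y where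
  n := Φ.n
  f i y := Φ.f i (T y)
  nonneg i y := Φ.nonneg i (T y)
  le_one i y := Φ.le_one i (T y)
  sum_one y := Φ.sum_one (T y)

/-- The trivial partition of unity `{1}`. -/
def triv (X : Type*) : PartUnity X where
  n := 1
  f _ _ := 1
  nonneg _ _ := zero_le_one
  le_one _ _ := le_rfl
  sum_one _ := by simp

/-- `dyn T Φ n` is the dynamical join `Φ₀ⁿ⁻¹ = ⋁_{i=0}^{n-1} TⁱΦ`
(joined with a harmless trivial factor). -/
def dyn (T : X → X) (Φ : PartUnity X) : ℕ → PartUnity X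
  | 0 => triv X
  | n + 1 => Φ.join ((dyn T Φ n).comp T)

/-- The product partition of unity `Φ ⊗ Ψ` on `X × Y`. -/
def prod (Φ : PartUnity X) (Ψ : PartUnity Y) : PartUnity (X × Y) where
  n := Φ.n * Ψ.n
  f k p := Φ.f (finProdFinEquiv.symm k).1 p.1 * Ψ.f (finProdFinEquiv.symm k).2 p.2
  nonneg k p := mul_nonneg (Φ.nonneg _ _) (Ψ.nonneg _ _)
  le_one k p := mul_le_one₀ (Φ.le_one _ _) (Ψ.nonneg _ _) (Ψ.le_one _ _)
  sum_one p := by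
    rw [← Equiv.sum_comp (finProdFinEquiv : Fin Φ.n × Fin Ψ.n ≃ Fin (Φ.n * Ψ.n))
      (fun k => Φ.f (finProdFinEquiv.symm k).1 p.1 * Ψ.f (finProdFinEquiv.symm k).2 p.2)]
    simp only [Equiv.symm_apply_apply]
    rw [Fintype.sum_prod_type]
    dsimp only
    rw [← Finset.sum_mul_sum, Φ.sum_one p.1, Ψ.sum_one p.2, one_mul]

/-- The diameter of a partition of unity: the maximum of the diameters of the
supports of its members. -/
noncomputable def diam [PseudoMetricSpace X] (Φ : PartUnity X) : ℝ :=
  ⨆ i, Metric.diam (tsupport (Φ.f i))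

end PartUnity

/-! ### Metric entropy via partitions of unity -/

variable {X Y : Type*}

/-- The static entropy `H̃_μ(Φ) = Σ_φ ( −μ(φ) log μ(φ) + μ(φ log φ) )`. -/
noncomputable def statEnt [MeasurableSpace X] (μ : Measure X) (Φ : PartUnity X) : ℝ :=
  ∑ i, (-((∫ x, Φ.f i x ∂μ) * Real.log (∫ x, Φ.f i x ∂μ)) +
    ∫ x, Φ.f i x * Real.log (Φ.f i x) ∂μ)

/-- The conditional measure `μ_ψ`, determined by `μ_ψ(φ) = μ(φψ)/μ(ψ)`. -/
noncomputable def condMeas [MeasurableSpace X] (μ : Measure X) (ψ : X → ℝ) : Measure X :=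
  (ENNReal.ofReal (∫ x, ψ x ∂μ))⁻¹ • μ.withDensity (fun x => ENNReal.ofReal (ψ x))

/-- The conditional static entropy `H̃_μ(Φ | Ψ) = Σ_ψ μ(ψ) H̃_{μ_ψ}(Φ)`
(terms with `μ(ψ) = 0` vanish since they are multiplied by `μ(ψ) = 0`). -/
noncomputable def condStatEnt [MeasurableSpace X] (μ : Measure X) (Φ Ψ : PartUnity X) : ℝ :=
  ∑ j, (∫ x, Ψ.f j x ∂μ) * statEnt (condMeas μ (Ψ.f j)) Φ

/-- The local metric entropy `h̃_μ(T,Φ) = lim_n H̃_μ(Φ₀ⁿ⁻¹)/n`. -/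
noncomputable def locEnt [MeasurableSpace X] (T : X → X) (μ : Measure X) (Φ : PartUnity X) : ℝ :=
  Filter.atTop.limsup fun n : ℕ => statEnt μ (PartUnity.dyn T Φ n) / (n : ℝ)

/-- The local conditional metric entropy `h̃_μ(T,Φ|Ψ) = lim_n H̃_μ(Φ₀ⁿ⁻¹|Ψ₀ⁿ⁻¹)/n`. -/
noncomputable def condLocEnt [MeasurableSpace X] (T : X → X) (μ : Measure X)
    (Φ Ψ : PartUnity X) : ℝ :=
  Filter.atTop.limsup fun n : ℕ =>
    condStatEnt μ (PartUnity.dyn T Φ n) (PartUnity.dyn T Ψ n) / (n : ℝ)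

/-- The metric entropy `h̃_μ(T)`: supremum of `h̃_μ(T,Φ)` over continuous
partitions of unity. -/
noncomputable def metEnt [TopologicalSpace X] [MeasurableSpace X]
    (T : X → X) (μ : Measure X) : EReal :=
  ⨆ Φ : {Φ : PartUnity X // Φ.Cont}, ((locEnt T μ Φ.1 : ℝ) : EReal)

/-! ### Topological entropy via partitions of unity -/

/-- The topological static entropy `H̃(Φ) = Σ_φ sup φ`. -/
noncomputable def topStat (Φ : PartUnity X) : ℝ := ∑ i, ⨆ x, Φ.f i x

/-- The local topological entropy `h̃(T,Φ) = lim_n (1/n) log H̃(Φ₀ⁿ⁻¹)`. -/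
noncomputable def topLocEnt (T : X → X) (Φ : PartUnity X) : ℝ :=
  Filter.atTop.limsup fun n : ℕ => Real.log (topStat (PartUnity.dyn T Φ n)) / (n : ℝ)

/-- The topological entropy `h̃_top(T)`: supremum of `h̃(T,Φ)` over continuous
partitions of unity. -/
noncomputable def topEnt [TopologicalSpace X] (T : X → X) : EReal :=
  ⨆ Φ : {Φ : PartUnity X // Φ.Cont}, ((topLocEnt T Φ.1 : ℝ) : EReal)

/-! ### Classical Kolmogorov–Sinai entropy -/

/-- A finite Borel partition of `X` (indexed; atoms may be empty). -/
structure FinBorelPart (X : Type*) [MeasurableSpace X] where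
  n : ℕ
  A : Fin n → Set X
  meas : ∀ i, MeasurableSet (A i)
  disj : ∀ i j, i ≠ j → Disjoint (A i) (A j)
  cover : ⋃ i, A i = Set.univ

/-- Local Kolmogorov–Sinai entropy `h_μ(T,𝒜) = lim_n (1/n) Σ_{A ∈ 𝒜₀ⁿ⁻¹} −μ(A) log μ(A)`. -/
noncomputable def ksLocEnt [MeasurableSpace X] (T : X → X) (μ : Measure X)
    (P : FinBorelPart X) : ℝ :=
  Filter.atTop.limsup fun n : ℕ =>
    (∑ σ : Fin n → Fin P.n,
      Real.negMulLog (μ (⋂ i : Fin n, T^[(i : ℕ)] ⁻¹' P.A (σ i))).toReal) / (n : ℝ)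

/-- The Kolmogorov–Sinai metric entropy `h_μ(T)`. -/
noncomputable def ksEnt [MeasurableSpace X] (T : X → X) (μ : Measure X) : EReal :=
  ⨆ P : FinBorelPart X, ((ksLocEnt T μ P : ℝ) : EReal)

/-! ### Classical topological entropy via open covers -/

/-- A finite open cover of `X`. -/
structure FinOpenCover (X : Type*) [TopologicalSpace X] where
  n : ℕ
  U : Fin n → Set X
  opn : ∀ i, IsOpen (U i)
  cov : ⋃ i, U i = Set.univ

/-- The member `⋂_{i<n} T^{-i} U_{σ(i)}` of the dynamical refinement of a cover. -/
def dynSet (T : X → X) {m : ℕ} (U : Fin m → Set X) (n : ℕ) (σ : Fin n → Fin m) : Set X :=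
  ⋂ i : Fin n, T^[(i : ℕ)] ⁻¹' U (σ i)

/-- Minimal cardinality of a subfamily of `V` covering `S`. -/
noncomputable def coverNum {α : Type*} [Fintype α] (V : α → Set X) (S : Set X) : ℕ :=
  sInf {k | ∃ t : Finset α, t.card = k ∧ S ⊆ ⋃ i ∈ t, V i}

/-- The local classical topological entropy `h(T,𝒰)` of an open cover. -/
noncomputable def covLocEnt [TopologicalSpace X] (T : X → X) (C : FinOpenCover X) : ℝ :=
  Filter.atTop.limsup fun n : ℕ =>
    Real.log ((coverNum (fun σ : Fin n → Fin C.n => dynSet T C.U n σ) Set.univ : ℕ) : ℝ) / (n : ℝ)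

/-- The classical topological entropy `h_top(T)` via open covers. -/
noncomputable def topEntCov [TopologicalSpace X] (T : X → X) : EReal :=
  ⨆ C : FinOpenCover X, ((covLocEnt T C : ℝ) : EReal)

/-! ### Misiurewicz topological tail entropy -/

/-- The local conditional topological entropy `h(𝒰|𝒱)` of two open covers. -/
noncomputable def misCondLoc [TopologicalSpace X] (T : X → X) (CU CV : FinOpenCover X) : ℝ :=
  Filter.atTop.limsup fun n : ℕ =>
    Real.log (((⨆ τ : Fin n → Fin CV.n,
      coverNum (fun σ : Fin n → Fin CU.n => dynSet T CU.U n σ) (dynSet T CV.U n τ) : ℕ)) : ℝ) / (n : ℝ)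

/-- The conditional topological entropy `h(T|𝒱) = sup_𝒰 h(𝒰|𝒱)`. -/
noncomputable def misCond [TopologicalSpace X] (T : X → X) (CV : FinOpenCover X) : EReal :=
  ⨆ CU : FinOpenCover X, ((misCondLoc T CU CV : ℝ) : EReal)

/-- Misiurewicz's topological tail entropy `h*(T) = inf_𝒱 h(T|𝒱)`. -/
noncomputable def misTail [TopologicalSpace X] (T : X → X) : EReal :=
  ⨅ CV : FinOpenCover X, misCond T CV

/-! ### Topological tail entropy via partitions of unity -/

/-- `H̃(Φ|ψ) = Σ_φ sup_{supp ψ} φ`. -/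
noncomputable def condTopStatPU [TopologicalSpace X] (Φ : PartUnity X) (ψ : X → ℝ) : ℝ :=
  ∑ i, ⨆ x ∈ tsupport ψ, Φ.f i x

/-- The weight set `D(Ψ) = {a : inf ψ ≤ a_ψ ≤ sup ψ, Σ a_ψ = 1}`. -/
def weights (Ψ : PartUnity X) : Set (Fin Ψ.n → ℝ) :=
  {a | (∀ j, (⨅ x, Ψ.f j x) ≤ a j ∧ a j ≤ ⨆ x, Ψ.f j x) ∧ ∑ j, a j = 1}

/-- `H̃_n(Φ|Ψ) = sup_{a ∈ D(Ψ₀ⁿ⁻¹)} Σ_ψ a_ψ H̃(Φ₀ⁿ⁻¹|ψ)`. -/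
noncomputable def tailStat [TopologicalSpace X] (T : X → X) (Φ Ψ : PartUnity X) (n : ℕ) : ℝ :=
  sSup {r | ∃ a ∈ weights (PartUnity.dyn T Ψ n),
    r = ∑ j, a j * condTopStatPU (PartUnity.dyn T Φ n) ((PartUnity.dyn T Ψ n).f j)}

/-- The local conditional topological entropy `h̃(Φ|Ψ) = limsup_n (1/n) log H̃_n(Φ|Ψ)`. -/
noncomputable def tailLoc [TopologicalSpace X] (T : X → X) (Φ Ψ : PartUnity X) : ℝ :=
  Filter.atTop.limsup fun n : ℕ => Real.log (tailStat T Φ Ψ n) / (n : ℝ)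

/-- The conditional topological entropy `h̃(T|Ψ) = sup_Φ h̃(Φ|Ψ)` over continuous `Φ`. -/
noncomputable def condTopEntPU [TopologicalSpace X] (T : X → X) (Ψ : PartUnity X) : EReal :=
  ⨆ Φ : {Φ : PartUnity X // Φ.Cont}, ((tailLoc T Φ.1 Ψ : ℝ) : EReal)

/-- The topological tail entropy `h̃*(T) = inf_Ψ h̃(T|Ψ)` over continuous `Ψ`. -/
noncomputable def tailEntPU [TopologicalSpace X] (T : X → X) : EReal :=
  ⨅ Ψ : {Ψ : PartUnity X // Ψ.Cont}, condTopEntPU T Ψ.1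

/-! ### Pressures -/

/-- The Birkhoff sum `S_n g = Σ_{i<n} g ∘ Tⁱ`. -/
def birkhoff (T : X → X) (g : X → ℝ) (n : ℕ) (x : X) : ℝ :=
  ∑ i ∈ Finset.range n, g (T^[i] x)

/-- The static pressure `P̃(T,g,Φ,n) = Σ_{φ ∈ Φ₀ⁿ⁻¹} sup (φ e^{S_n g})`. -/
noncomputable def puPressStat (T : X → X) (g : X → ℝ) (Φ : PartUnity X) (n : ℕ) : ℝ :=
  ∑ i, ⨆ x, (PartUnity.dyn T Φ n).f i x * Real.exp (birkhoff T g n x)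

/-- The local topological pressure `P̃_top(T,g,Φ) = lim_n (1/n) log P̃(T,g,Φ,n)`. -/
noncomputable def puLocPress (T : X → X) (g : X → ℝ) (Φ : PartUnity X) : ℝ :=
  Filter.atTop.limsup fun n : ℕ => Real.log (puPressStat T g Φ n) / (n : ℝ)

/-- The topological pressure `P̃_top(T,g)` via continuous partitions of unity. -/
noncomputable def puTopPress [TopologicalSpace X] (T : X → X) (g : X → ℝ) : EReal :=
  ⨆ Φ : {Φ : PartUnity X // Φ.Cont}, ((puLocPress T g Φ.1 : ℝ) : EReal)

/-- The classical static pressure of an open cover: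
`inf { Σ_{V ∈ 𝒱} sup_V e^{S_n g} : 𝒱 a subcover of 𝒰₀ⁿ⁻¹ }`. -/
noncomputable def covPressStat [TopologicalSpace X] (T : X → X) (g : X → ℝ)
    (C : FinOpenCover X) (n : ℕ) : ℝ :=
  sInf {r | ∃ t : Finset (Fin n → Fin C.n),
    (Set.univ ⊆ ⋃ σ ∈ t, dynSet T C.U n σ) ∧
    r = ∑ σ ∈ t, ⨆ x ∈ dynSet T C.U n σ, Real.exp (birkhoff T g n x)}

/-- The local classical topological pressure of an open cover. -/
noncomputable def covLocPress [TopologicalSpace X] (T : X → X) (g : X → ℝ)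
    (C : FinOpenCover X) : ℝ :=
  Filter.atTop.limsup fun n : ℕ => Real.log (covPressStat T g C n) / (n : ℝ)

/-- The classical topological pressure `P_top(T,g)` via open covers. -/
noncomputable def topPress [TopologicalSpace X] (T : X → X) (g : X → ℝ) : EReal :=
  ⨆ C : FinOpenCover X, ((covLocPress T g C : ℝ) : EReal)

/-! ### Topological tail pressure -/

/-- `P̃_n(T,g,Φ|Ψ) = sup_{a ∈ D(Ψ₀ⁿ⁻¹)} Σ_ψ a_ψ Σ_φ sup_{supp ψ} (φ e^{S_n g})`. -/
noncomputable def tailPressStat [TopologicalSpace X] (T : X → X) (g : X → ℝ)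
    (Φ Ψ : PartUnity X) (n : ℕ) : ℝ :=
  sSup {r | ∃ a ∈ weights (PartUnity.dyn T Ψ n),
    r = ∑ j, a j * ∑ i, ⨆ x ∈ tsupport ((PartUnity.dyn T Ψ n).f j),
      (PartUnity.dyn T Φ n).f i x * Real.exp (birkhoff T g n x)}

/-- The local topological tail pressure `P̃(T,g,Φ|Ψ) = limsup_n (1/n) log P̃_n(T,g,Φ|Ψ)`. -/
noncomputable def tailLocPress [TopologicalSpace X] (T : X → X) (g : X → ℝ)
    (Φ Ψ : PartUnity X) : ℝ :=
  Filter.atTop.limsup fun n : ℕ => Real.log (tailPressStat T g Φ Ψ n) / (n : ℝ)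

/-- The conditional topological pressure `P̃(T,g|Ψ) = sup_Φ P̃(T,g,Φ|Ψ)` over continuous `Φ`. -/
noncomputable def condTopPressPU [TopologicalSpace X] (T : X → X) (g : X → ℝ)
    (Ψ : PartUnity X) : EReal :=
  ⨆ Φ : {Φ : PartUnity X // Φ.Cont}, ((tailLocPress T g Φ.1 Ψ : ℝ) : EReal)

/-- The topological tail pressure `P̃*(T,g) = inf_Ψ P̃(T,g|Ψ)` over continuous `Ψ`. -/
noncomputable def puTailPress [TopologicalSpace X] (T : X → X) (g : X → ℝ) : EReal :=
  ⨅ Ψ : {Ψ : PartUnity X // Ψ.Cont}, condTopPressPU T g Ψ.1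

/-! ### Classical topological tail pressure (Li–Chen–Cheng) -/

/-- The Bowen ball `B(x,ε,n) = {y : d(Tⁱx,Tⁱy) < ε for all 0 ≤ i < n}`. -/
def bowenBall [PseudoMetricSpace X] (T : X → X) (x : X) (ε : ℝ) (n : ℕ) : Set X :=
  {y | ∀ i < n, dist (T^[i] x) (T^[i] y) < ε}

/-- `E` is `(n,δ)`-separated: distinct points `y,z ∈ E` satisfy `d(Tⁱy,Tⁱz) > δ`
for some `0 ≤ i < n`. -/
def IsSep [PseudoMetricSpace X] (T : X → X) (n : ℕ) (δ : ℝ) (E : Finset X) : Prop :=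
  ∀ y ∈ E, ∀ z ∈ E, y ≠ z → ∃ i < n, δ < dist (T^[i] y) (T^[i] z)

/-- `P_n(T,g,δ,ε) = sup_x sup { Σ_{y∈E} e^{S_n g(y)} : E (n,δ)-separated ⊆ B(x,ε,n) }`. -/
noncomputable def sepPress [PseudoMetricSpace X] (T : X → X) (g : X → ℝ)
    (n : ℕ) (δ ε : ℝ) : ℝ :=
  ⨆ x : X, sSup {r | ∃ E : Finset X, ↑E ⊆ bowenBall T x ε n ∧ IsSep T n δ E ∧
    r = ∑ y ∈ E, Real.exp (birkhoff T g n y)}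

/-- The classical topological tail pressure
`P*(T,g) = lim_{ε→0} lim_{δ→0} limsup_n (1/n) log P_n(T,g,δ,ε)`
(the inner limits are monotone, hence given by `inf_ε sup_δ`). -/
noncomputable def tailPress [PseudoMetricSpace X] (T : X → X) (g : X → ℝ) : EReal :=
  ⨅ ε : {ε : ℝ // 0 < ε}, ⨆ δ : {δ : ℝ // 0 < δ},
    Filter.atTop.limsup fun n : ℕ => ((Real.log (sepPress T g n δ.1 ε.1) / (n : ℝ) : ℝ) : EReal)

/-! With `η = negMulLog`, the static entropy is `H̃_μ(Φ) = Σ_φ (η(μ φ) - μ(η ∘ φ))` and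
`μ(ψ) H̃_{μ_ψ}(Φ) = Σ_φ (μ(ψ) η(μ(φψ)/μ(ψ)) - μ(ψ · η ∘ φ))`. The chain rule (i) is the identity
`η(xy) = y η(x) + x η(y)`, used pointwise and for `μ(φψ) = (μ(φψ)/μ(ψ)) · μ(ψ)`; (ii) follows from
(i) applied three times, since `H̃_μ` does not see how a join is bracketed. Monotonicity (iii) is
the log-sum inequality, i.e. Jensen's inequality for the concave `η` with the weights
`μ(ψ₁ψ₂)/μ(ψ₁)`, and nonnegativity (iv) is Jensen's inequality `μ(η ∘ φ) ≤ η(μ φ)` for the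
probability measures `μ` and `μ_ψ`. -/

open Real

section Integrability

variable [MeasurableSpace X] {μ : Measure X} {f : X → ℝ}

lemma integrable_of_mem_Icc [IsFiniteMeasure μ] (hf : Measurable f) (hf01 : ∀ x, f x ∈ Icc 0 1) :
    Integrable f μ :=
  .of_bound hf.aestronglyMeasurable 1 <| .of_forall fun x => by
    rw [norm_of_nonneg (hf01 x).1]
    exact (hf01 x).2

lemma integrable_negMulLog_comp [IsFiniteMeasure μ] (hf : Measurable f)
    (hf01 : ∀ x, f x ∈ Icc 0 1) : Integrable (fun x => negMulLog (f x)) μ :=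
  integrable_of_mem_Icc (continuous_negMulLog.measurable.comp hf) fun x =>
    ⟨negMulLog_nonneg (hf01 x).1 (hf01 x).2,
      (negMulLog_le_one_sub_self (hf01 x).1).trans (by linarith [(hf01 x).1])⟩

lemma MeasureTheory.Integrable.mul_of_mem_Icc {h : X → ℝ} (hh : Integrable h μ) (hf : Measurable f)
    (hf01 : ∀ x, f x ∈ Icc 0 1) : Integrable (fun x => f x * h x) μ :=
  hh.bdd_mul hf.aestronglyMeasurable (c := 1) <| .of_forall fun x => by
    rw [norm_of_nonneg (hf01 x).1]
    exact (hf01 x).2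

end Integrability

namespace PartUnity

lemma mem_Icc (Φ : PartUnity X) (i : Fin Φ.n) (x : X) : Φ.f i x ∈ Icc 0 1 :=
  ⟨Φ.nonneg i x, Φ.le_one i x⟩

lemma sum_join {M : Type*} [AddCommMonoid M] (Φ Ψ : PartUnity X) (F : (X → ℝ) → M) :
    ∑ k, F ((Φ.join Ψ).f k) = ∑ i, ∑ j, F (fun x => Φ.f i x * Ψ.f j x) := by
  show ∑ k : Fin (Φ.n * Ψ.n), _ = _
  rw [← finProdFinEquiv.sum_comp, Fintype.sum_prod_type]
  simp only [join, Equiv.symm_apply_apply]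

variable [MeasurableSpace X] {μ : Measure X} {Φ Ψ : PartUnity X}

lemma Meas.join (hΦ : Φ.Meas) (hΨ : Ψ.Meas) : (Φ.join Ψ).Meas :=
  fun _ => (hΦ _).mul (hΨ _)

lemma Meas.sum_integral_mul (hΦ : Φ.Meas) {g : X → ℝ} (hg : Integrable g μ) :
    ∑ i, ∫ x, Φ.f i x * g x ∂μ = ∫ x, g x ∂μ := by
  rw [← integral_finsetSum _ fun i _ => hg.mul_of_mem_Icc (hΦ i) (Φ.mem_Icc i)]
  simp_rw [← Finset.sum_mul, Φ.sum_one, one_mul]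

end PartUnity

section StaticEntropy

variable [MeasurableSpace X] {Φ : PartUnity X}

noncomputable def statEntTerm (ν : Measure X) (f : X → ℝ) : ℝ :=
  negMulLog (∫ x, f x ∂ν) - ∫ x, negMulLog (f x) ∂ν

lemma statEnt_eq_sum_statEntTerm (ν : Measure X) (Φ : PartUnity X) :
    statEnt ν Φ = ∑ i, statEntTerm ν (Φ.f i) := by
  simp only [statEnt, statEntTerm, negMulLog_eq_neg, integral_neg, sub_neg_eq_add]

lemma statEntTerm_nonneg (ν : Measure X) [IsProbabilityMeasure ν] {f : X → ℝ}
    (hf : Measurable f) (hf01 : ∀ x, f x ∈ Icc 0 1) : 0 ≤ statEntTerm ν f :=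
  sub_nonneg.2 <| concaveOn_negMulLog.le_map_integral continuous_negMulLog.continuousOn isClosed_Ici
    (.of_forall fun x => (hf01 x).1) (integrable_of_mem_Icc hf hf01)
    (integrable_negMulLog_comp hf hf01)

lemma statEnt_nonneg (ν : Measure X) [IsProbabilityMeasure ν] (hΦ : Φ.Meas) :
    0 ≤ statEnt ν Φ := by
  rw [statEnt_eq_sum_statEntTerm]
  exact Finset.sum_nonneg fun i _ => statEntTerm_nonneg ν (hΦ i) (Φ.mem_Icc i)

end StaticEntropy

section ConditionalMeasure

variable [MeasurableSpace X] {μ : Measure X} {ψ : X → ℝ}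

lemma integral_condMeas (hψ : Measurable ψ) (hψ0 : ∀ x, 0 ≤ ψ x) (f : X → ℝ) :
    ∫ x, f x ∂condMeas μ ψ = (∫ x, ψ x ∂μ)⁻¹ * ∫ x, ψ x * f x ∂μ := by
  rw [condMeas, integral_smul_measure, integral_withDensity_eq_integral_toReal_smul
    hψ.ennreal_ofReal (.of_forall fun _ => ENNReal.ofReal_lt_top),
    ENNReal.toReal_inv, ENNReal.toReal_ofReal (integral_nonneg hψ0)]
  simp only [ENNReal.toReal_ofReal (hψ0 _), smul_eq_mul]

lemma isProbabilityMeasure_condMeas (hψi : Integrable ψ μ) (hψ0 : ∀ x, 0 ≤ ψ x)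
    (hpos : 0 < ∫ x, ψ x ∂μ) : IsProbabilityMeasure (condMeas μ ψ) := by
  constructor
  rw [condMeas, Measure.smul_apply, withDensity_apply _ MeasurableSet.univ, Measure.restrict_univ,
    ← ofReal_integral_eq_lintegral_ofReal hψi (.of_forall hψ0), smul_eq_mul]
  exact ENNReal.inv_mul_cancel (ENNReal.ofReal_pos.2 hpos).ne' ENNReal.ofReal_ne_top

end ConditionalMeasure

theorem sum_mul_negMulLog_div_le {ι : Type*} (s : Finset ι) {a b : ι → ℝ}
    (ha : ∀ i ∈ s, 0 ≤ a i) (hab : ∀ i ∈ s, a i ≤ b i) :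
    ∑ i ∈ s, b i * negMulLog (a i / b i) ≤
      (∑ i ∈ s, b i) * negMulLog ((∑ i ∈ s, a i) / ∑ i ∈ s, b i) := by
  have hb : ∀ i ∈ s, 0 ≤ b i := fun i hi => (ha i hi).trans (hab i hi)
  have hB0 : 0 ≤ ∑ i ∈ s, b i := Finset.sum_nonneg hb
  generalize hB : ∑ i ∈ s, b i = B at hB0 ⊢
  rcases hB0.eq_or_lt with rfl | hBpos
  · have hb0 : ∀ i ∈ s, b i = 0 := (Finset.sum_eq_zero_iff_of_nonneg hb).1 hB
    rw [zero_mul, Finset.sum_eq_zero fun i hi => by rw [hb0 i hi, zero_mul]]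
  have hw : ∑ i ∈ s, b i / B = 1 := by rw [← Finset.sum_div, hB, div_self hBpos.ne']
  have hwp : ∀ i ∈ s, (b i / B) • (a i / b i) = a i / B := fun i hi => by
    rcases eq_or_ne (b i) 0 with h | h
    · simp [h, le_antisymm (h ▸ hab i hi) (ha i hi)]
    · rw [smul_eq_mul]
      field_simp
  have jensen := concaveOn_negMulLog.le_map_sum (fun i hi => div_nonneg (hb i hi) hBpos.le) hw
    (p := fun i => a i / b i) fun i hi => div_nonneg (ha i hi) (hb i hi)
  rw [Finset.sum_congr rfl hwp, ← Finset.sum_div] at jensen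
  calc ∑ i ∈ s, b i * negMulLog (a i / b i)
      = B * ∑ i ∈ s, (b i / B) • negMulLog (a i / b i) := by
        rw [Finset.mul_sum]
        refine Finset.sum_congr rfl fun i _ => ?_
        rw [smul_eq_mul]
        field_simp
    _ ≤ B * negMulLog ((∑ i ∈ s, a i) / B) := mul_le_mul_of_nonneg_left jensen hBpos.le

section ConditionalEntropy

variable [MeasurableSpace X] {μ : Measure X} {Φ Ψ : PartUnity X}

noncomputable def condStatEntTerm (μ : Measure X) (φ ψ : X → ℝ) : ℝ :=
  (∫ x, ψ x ∂μ) * negMulLog ((∫ x, φ x * ψ x ∂μ) / ∫ x, ψ x ∂μ) -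
    ∫ x, ψ x * negMulLog (φ x) ∂μ

lemma integral_mul_statEnt_condMeas (Φ : PartUnity X) {ψ : X → ℝ} (hψ : Measurable ψ)
    (hψi : Integrable ψ μ) (hψ0 : ∀ x, 0 ≤ ψ x) :
    (∫ x, ψ x ∂μ) * statEnt (condMeas μ ψ) Φ = ∑ i, condStatEntTerm μ (Φ.f i) ψ := by
  simp only [statEnt_eq_sum_statEntTerm, statEntTerm, integral_condMeas hψ hψ0, Finset.mul_sum,
    condStatEntTerm]
  refine Finset.sum_congr rfl fun i _ => ?_
  rcases (integral_nonneg hψ0 : 0 ≤ ∫ x, ψ x ∂μ).eq_or_lt with hc | hc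
  · have hψ_ae : ψ =ᵐ[μ] 0 := (integral_eq_zero_iff_of_nonneg hψ0 hψi).1 hc.symm
    have hzero : ∫ x, ψ x * negMulLog (Φ.f i x) ∂μ = 0 :=
      integral_eq_zero_of_ae (by filter_upwards [hψ_ae] with x hx; simp [hx])
    simp [← hc, hzero]
  · simp_rw [mul_comm (ψ _) (Φ.f i _)]
    field_simp

lemma condStatEnt_eq_sum [IsFiniteMeasure μ] (Φ : PartUnity X) (hΨ : Ψ.Meas) :
    condStatEnt μ Φ Ψ = ∑ j, ∑ i, condStatEntTerm μ (Φ.f i) (Ψ.f j) :=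
  Finset.sum_congr rfl fun j _ => integral_mul_statEnt_condMeas Φ (hΨ j)
    (integrable_of_mem_Icc (hΨ j) (Ψ.mem_Icc j)) (Ψ.nonneg j)

lemma condStatEnt_nonneg [IsFiniteMeasure μ] (hΦ : Φ.Meas) (hΨ : Ψ.Meas) :
    0 ≤ condStatEnt μ Φ Ψ := by
  refine Finset.sum_nonneg fun j _ => ?_
  rcases (integral_nonneg (Ψ.nonneg j) : 0 ≤ ∫ x, Ψ.f j x ∂μ).eq_or_lt with hc | hc
  · rw [← hc, zero_mul]
  · have _ := isProbabilityMeasure_condMeas (integrable_of_mem_Icc (hΨ j) (Ψ.mem_Icc j))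
      (Ψ.nonneg j) hc
    exact mul_nonneg hc.le (statEnt_nonneg _ hΦ)

/-- The side condition makes the case `b = 0` work with the junk value `a / 0 = 0`. -/
lemma negMulLog_eq_mul_negMulLog_div {a b : ℝ} (h : b = 0 → a = 0) :
    negMulLog a = b * negMulLog (a / b) + a / b * negMulLog b := by
  rcases eq_or_ne b 0 with hb | hb
  · simp [hb, h hb]
  · rw [← negMulLog_mul, div_mul_cancel₀ a hb]

lemma sum_statEntTerm_mul [IsFiniteMeasure μ] (hΦ : Φ.Meas) {g : X → ℝ} (hg : Measurable g)
    (hg01 : ∀ x, g x ∈ Icc 0 1) :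
    ∑ i, statEntTerm μ (fun x => Φ.f i x * g x) =
      statEntTerm μ g + ∑ i, condStatEntTerm μ (Φ.f i) g := by
  have hgi : Integrable g μ := integrable_of_mem_Icc hg hg01
  have hηgi : Integrable (fun x => negMulLog (g x)) μ := integrable_negMulLog_comp hg hg01
  set b := ∫ x, g x ∂μ
  set a : Fin Φ.n → ℝ := fun i => ∫ x, Φ.f i x * g x ∂μ
  have hsum_a : ∑ i, a i = b := hΦ.sum_integral_mul hgi
  have ha : ∀ i, negMulLog (a i) = b * negMulLog (a i / b) + a i / b * negMulLog b := fun i =>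
    negMulLog_eq_mul_negMulLog_div fun hb => le_antisymm
      (hb ▸ integral_mono (hgi.mul_of_mem_Icc (hΦ i) (Φ.mem_Icc i)) hgi fun x =>
        mul_le_of_le_one_left (hg01 x).1 (Φ.le_one i x))
      (integral_nonneg fun x => mul_nonneg (Φ.nonneg i x) (hg01 x).1)
  have hηmul : ∀ i, ∫ x, negMulLog (Φ.f i x * g x) ∂μ =
      ∫ x, g x * negMulLog (Φ.f i x) ∂μ + ∫ x, Φ.f i x * negMulLog (g x) ∂μ := fun i => by
    simp_rw [negMulLog_mul]
    exact integral_add ((integrable_negMulLog_comp (hΦ i) (Φ.mem_Icc i)).mul_of_mem_Icc hg hg01)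
      (hηgi.mul_of_mem_Icc (hΦ i) (Φ.mem_Icc i))
  have hηb : ∑ i, a i / b * negMulLog b = negMulLog b := by
    rw [← Finset.sum_mul, ← Finset.sum_div, hsum_a]
    rcases eq_or_ne b 0 with hb | hb
    · simp [hb]
    · rw [div_self hb, one_mul]
  have hterm : ∀ i, statEntTerm μ (fun x => Φ.f i x * g x) = condStatEntTerm μ (Φ.f i) g +
      (a i / b * negMulLog b - ∫ x, Φ.f i x * negMulLog (g x) ∂μ) := fun i => by
    rw [statEntTerm, ha i, hηmul i, condStatEntTerm]
    ring
  rw [Finset.sum_congr rfl fun i _ => hterm i, Finset.sum_add_distrib, Finset.sum_sub_distrib, hηb,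
    hΦ.sum_integral_mul hηgi, statEntTerm]
  ring

theorem statEnt_join [IsFiniteMeasure μ] (hΦ : Φ.Meas) (hΨ : Ψ.Meas) :
    statEnt μ (Φ.join Ψ) = statEnt μ Ψ + condStatEnt μ Φ Ψ := by
  rw [statEnt_eq_sum_statEntTerm, PartUnity.sum_join, Finset.sum_comm, condStatEnt_eq_sum Φ hΨ,
    statEnt_eq_sum_statEntTerm, ← Finset.sum_add_distrib]
  exact Finset.sum_congr rfl fun j _ => sum_statEntTerm_mul hΦ (hΨ j) (Ψ.mem_Icc j)

lemma statEnt_join_join_comm (μ : Measure X) (Φ₁ Φ₂ Ψ : PartUnity X) :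
    statEnt μ ((Φ₁.join Φ₂).join Ψ) = statEnt μ (Φ₂.join (Φ₁.join Ψ)) := by
  simp only [statEnt_eq_sum_statEntTerm, PartUnity.sum_join (F := statEntTerm μ),
    PartUnity.sum_join Φ₁ Φ₂ (fun h => ∑ k, statEntTerm μ fun x => h x * Ψ.f k x)]
  rw [Finset.sum_comm]
  refine Finset.sum_congr rfl fun i _ => ?_
  rw [PartUnity.sum_join Φ₁ Ψ (fun h => statEntTerm μ fun x => Φ₂.f i x * h x)]
  refine Finset.sum_congr rfl fun j _ => Finset.sum_congr rfl fun k _ => ?_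
  congr 1
  funext x
  ring

theorem condStatEnt_join_left [IsFiniteMeasure μ] {Φ₁ Φ₂ : PartUnity X} (hΦ₁ : Φ₁.Meas)
    (hΦ₂ : Φ₂.Meas) (hΨ : Ψ.Meas) :
    condStatEnt μ (Φ₁.join Φ₂) Ψ = condStatEnt μ Φ₁ Ψ + condStatEnt μ Φ₂ (Φ₁.join Ψ) := by
  have h₁ := statEnt_join (μ := μ) (hΦ₁.join hΦ₂) hΨ
  have h₂ := statEnt_join (μ := μ) hΦ₂ (hΦ₁.join hΨ)
  have h₃ := statEnt_join (μ := μ) hΦ₁ hΨ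
  rw [statEnt_join_join_comm] at h₁
  linarith

lemma sum_condStatEntTerm_mul_le [IsFiniteMeasure μ] (hΨ : Ψ.Meas) {f g : X → ℝ}
    (hf : Measurable f) (hf01 : ∀ x, f x ∈ Icc 0 1) (hg : Measurable g)
    (hg01 : ∀ x, g x ∈ Icc 0 1) :
    ∑ k, condStatEntTerm μ f (fun x => g x * Ψ.f k x) ≤ condStatEntTerm μ f g := by
  have hsum : ∀ {h : X → ℝ}, Integrable h μ → ∑ k, ∫ x, h x * Ψ.f k x ∂μ = ∫ x, h x ∂μ :=
    fun hh => by simpa only [mul_comm] using hΨ.sum_integral_mul hh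
  have hgi : Integrable g μ := integrable_of_mem_Icc hg hg01
  have hsum_a : ∑ k, ∫ x, f x * (g x * Ψ.f k x) ∂μ = ∫ x, f x * g x ∂μ := by
    simpa only [mul_assoc] using hsum (hgi.mul_of_mem_Icc hf hf01)
  have hsum_c : ∑ k, ∫ x, g x * Ψ.f k x * negMulLog (f x) ∂μ = ∫ x, g x * negMulLog (f x) ∂μ := by
    simpa only [mul_right_comm] using
      hsum ((integrable_negMulLog_comp hf hf01).mul_of_mem_Icc hg hg01)
  have hgΨ : ∀ k, Integrable (fun x => g x * Ψ.f k x) μ := fun k =>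
    (integrable_of_mem_Icc (hΨ k) (Ψ.mem_Icc k)).mul_of_mem_Icc hg hg01
  have logSum := sum_mul_negMulLog_div_le Finset.univ
    (a := fun k => ∫ x, f x * (g x * Ψ.f k x) ∂μ) (b := fun k => ∫ x, g x * Ψ.f k x ∂μ)
    (fun k _ => integral_nonneg fun x =>
      mul_nonneg (hf01 x).1 (mul_nonneg (hg01 x).1 (Ψ.nonneg k x)))
    (fun k _ => integral_mono ((hgΨ k).mul_of_mem_Icc hf hf01) (hgΨ k) fun x =>
      mul_le_of_le_one_left (mul_nonneg (hg01 x).1 (Ψ.nonneg k x)) (hf01 x).2)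
  simp only [condStatEntTerm, Finset.sum_sub_distrib, hsum_c]
  rw [hsum_a, hsum hgi] at logSum
  exact sub_le_sub_right logSum _

theorem condStatEnt_join_le [IsFiniteMeasure μ] {Ψ₁ Ψ₂ : PartUnity X} (hΦ : Φ.Meas)
    (hΨ₁ : Ψ₁.Meas) (hΨ₂ : Ψ₂.Meas) :
    condStatEnt μ Φ (Ψ₁.join Ψ₂) ≤ condStatEnt μ Φ Ψ₁ := by
  rw [condStatEnt_eq_sum Φ (hΨ₁.join hΨ₂), condStatEnt_eq_sum Φ hΨ₁,
    PartUnity.sum_join Ψ₁ Ψ₂ fun ψ => ∑ i, condStatEntTerm μ (Φ.f i) ψ]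
  refine Finset.sum_le_sum fun j _ => ?_
  rw [Finset.sum_comm]
  exact Finset.sum_le_sum fun i _ =>
    sum_condStatEntTerm_mul_le hΨ₂ (hΦ i) (Φ.mem_Icc i) (hΨ₁ j) (Ψ₁.mem_Icc j)

end ConditionalEntropy

theorem statEnt_basic_properties_general {X : Type*}
    [MeasurableSpace X]
    (μ : Measure X) [IsProbabilityMeasure μ]
    (Φ Ψ Φ₁ Φ₂ Ψ₁ Ψ₂ : PartUnity X)
    (hΦ : Φ.Meas) (hΨ : Ψ.Meas) (hΦ₁ : Φ₁.Meas) (hΦ₂ : Φ₂.Meas)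
    (hΨ₁ : Ψ₁.Meas) (hΨ₂ : Ψ₂.Meas) :
    statEnt μ (Φ.join Ψ) = statEnt μ Ψ + condStatEnt μ Φ Ψ ∧
    condStatEnt μ (Φ₁.join Φ₂) Ψ = condStatEnt μ Φ₁ Ψ + condStatEnt μ Φ₂ (Φ₁.join Ψ) ∧
    condStatEnt μ Φ (Ψ₁.join Ψ₂) ≤ condStatEnt μ Φ Ψ₁ ∧
    0 ≤ statEnt μ Φ ∧ 0 ≤ condStatEnt μ Φ Ψ :=
  ⟨statEnt_join hΦ hΨ, condStatEnt_join_left hΦ₁ hΦ₂ hΨ, condStatEnt_join_le hΦ hΨ₁ hΨ₂,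
    statEnt_nonneg μ hΦ, condStatEnt_nonneg hΦ hΨ⟩

/-- Basic properties of the static entropy and conditional static
entropy with respect to measurable partitions of unity. -/
theorem statEnt_basic_properties {X : Type*} [MetricSpace X] [CompactSpace X] [Nonempty X]
    [MeasurableSpace X] [BorelSpace X]
    (T : X → X) (hT : Continuous T) (hTsurj : Function.Surjective T)
    (μ : Measure X) [IsProbabilityMeasure μ] (hμ : MeasurePreserving T μ μ)
    (Φ Ψ Φ₁ Φ₂ Ψ₁ Ψ₂ : PartUnity X)
    (hΦ : Φ.Meas) (hΨ : Ψ.Meas) (hΦ₁ : Φ₁.Meas) (hΦ₂ : Φ₂.Meas)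
    (hΨ₁ : Ψ₁.Meas) (hΨ₂ : Ψ₂.Meas) :
    statEnt μ (Φ.join Ψ) = statEnt μ Ψ + condStatEnt μ Φ Ψ ∧
    condStatEnt μ (Φ₁.join Φ₂) Ψ = condStatEnt μ Φ₁ Ψ + condStatEnt μ Φ₂ (Φ₁.join Ψ) ∧
    condStatEnt μ Φ (Ψ₁.join Ψ₂) ≤ condStatEnt μ Φ Ψ₁ ∧
    0 ≤ statEnt μ Φ ∧ 0 ≤ condStatEnt μ Φ Ψ :=
  statEnt_basic_properties_general μ Φ Ψ Φ₁ Φ₂ Ψ₁ Ψ₂ hΦ hΨ hΦ₁ hΦ₂ hΨ₁ hΨ₂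
end

section
/- Let (X,T) be a topological dynamical system. For every T-invariant Borel probability measure μ on X and every continuous partition of unity Φ on X, H̃_μ(Φ) ≤ log H̃(Φ). As a consequence, h̃_μ(T,Φ) ≤ h̃(T,Φ) and h̃_μ(T) ≤ h̃_top(T). -/
/-! Bounding `φ log φ` by `φ log (sup φ)` bounds `H̃_μ(Φ)` by `∑ aᵢ log (sᵢ / aᵢ)`, where
`aᵢ = μ(φᵢ) ≤ sᵢ = sup φᵢ` and `∑ aᵢ = 1`; Gibbs' inequality bounds this by `log ∑ sᵢ = log H̃(Φ)`.
For the dynamical joins, `H̃` is submultiplicative, so `(1/n) log H̃(Φ₀ⁿ⁻¹) ≤ log H̃(Φ)`, while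
Jensen's inequality for `x log x` gives `H̃_μ ≥ 0`; these bounds let the inequality pass to the
limsups and then to the suprema. -/

open MeasureTheory Filter Set

/-! ### Metric entropy via partitions of unity -/

variable {X Y : Type*}

namespace PartUnity

lemma Cont.meas [TopologicalSpace X] [MeasurableSpace X] [OpensMeasurableSpace X]
    {Φ : PartUnity X} (hΦ : Φ.Cont) : Φ.Meas :=
  fun i => (hΦ i).measurable

lemma Meas.dyn [MeasurableSpace X] {T : X → X} (hT : Measurable T) {Φ : PartUnity X}
    (hΦ : Φ.Meas) : ∀ n, (PartUnity.dyn T Φ n).Meas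
  | 0 => fun _ => measurable_const
  | n + 1 => fun _ => (hΦ _).mul ((hΦ.dyn hT n _).comp hT)

lemma join_f_finProdFinEquiv (Φ Ψ : PartUnity X) (i : Fin Φ.n) (j : Fin Ψ.n) (x : X) :
    (Φ.join Ψ).f (finProdFinEquiv (i, j)) x = Φ.f i x * Ψ.f j x := by
  simp only [join, Equiv.symm_apply_apply]

lemma f_le_iSup (Φ : PartUnity X) (i : Fin Φ.n) (x : X) : Φ.f i x ≤ ⨆ y, Φ.f i y :=
  le_ciSup ⟨1, by rintro _ ⟨y, rfl⟩; exact Φ.le_one i y⟩ x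

lemma iSup_f_nonneg (Φ : PartUnity X) (i : Fin Φ.n) : 0 ≤ ⨆ y, Φ.f i y :=
  Real.iSup_nonneg (Φ.nonneg i)

end PartUnity

open PartUnity

lemma topStat_nonneg (Φ : PartUnity X) : 0 ≤ topStat Φ :=
  Finset.sum_nonneg fun i _ => Φ.iSup_f_nonneg i

lemma one_le_topStat [Nonempty X] (Φ : PartUnity X) : 1 ≤ topStat Φ := by
  obtain ⟨x⟩ := ‹Nonempty X›
  calc (1 : ℝ) = ∑ i, Φ.f i x := (Φ.sum_one x).symm
    _ ≤ topStat Φ := Finset.sum_le_sum fun i _ => Φ.f_le_iSup i x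

lemma topStat_triv_le : topStat (triv X) ≤ 1 := by
  show ∑ _ : Fin 1, ⨆ _ : X, (1 : ℝ) ≤ 1
  rw [Fin.sum_univ_one]
  exact Real.iSup_le (fun _ => le_rfl) zero_le_one

lemma topStat_comp_le (Φ : PartUnity X) (T : Y → X) : topStat (Φ.comp T) ≤ topStat Φ :=
  Finset.sum_le_sum fun i _ => Real.iSup_le (fun y => Φ.f_le_iSup i (T y)) (Φ.iSup_f_nonneg i)

lemma topStat_join_le (Φ Ψ : PartUnity X) : topStat (Φ.join Ψ) ≤ topStat Φ * topStat Ψ := by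
  change ∑ k : Fin (Φ.n * Ψ.n), ⨆ x, (Φ.join Ψ).f k x ≤ _
  rw [← finProdFinEquiv.sum_comp, Fintype.sum_prod_type, topStat, topStat,
    Finset.sum_mul_sum]
  gcongr with i _ j _
  simp only [join_f_finProdFinEquiv]
  exact Real.iSup_le (fun x => mul_le_mul (Φ.f_le_iSup i x) (Ψ.f_le_iSup j x) (Ψ.nonneg j x)
    (Φ.iSup_f_nonneg i)) (mul_nonneg (Φ.iSup_f_nonneg i) (Ψ.iSup_f_nonneg j))

lemma topStat_dyn_le (T : X → X) (Φ : PartUnity X) :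
    ∀ n, topStat (PartUnity.dyn T Φ n) ≤ topStat Φ ^ n
  | 0 => by rw [pow_zero]; exact topStat_triv_le
  | n + 1 =>
    calc topStat (Φ.join ((PartUnity.dyn T Φ n).comp T))
        ≤ topStat Φ * topStat ((PartUnity.dyn T Φ n).comp T) := topStat_join_le _ _
      _ ≤ topStat Φ * topStat Φ ^ n := by
        gcongr
        · exact topStat_nonneg Φ
        · exact (topStat_comp_le _ T).trans (topStat_dyn_le T Φ n)
      _ = topStat Φ ^ (n + 1) := (pow_succ' _ _).symm

lemma log_topStat_dyn_div_le [Nonempty X] (T : X → X) (Φ : PartUnity X) (n : ℕ) :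
    Real.log (topStat (PartUnity.dyn T Φ n)) / n ≤ Real.log (topStat Φ) := by
  have hlog : Real.log (topStat (PartUnity.dyn T Φ n)) ≤ n * Real.log (topStat Φ) := by
    rw [← Real.log_pow]
    exact Real.log_le_log (one_pos.trans_le (one_le_topStat _)) (topStat_dyn_le T Φ n)
  rcases n.eq_zero_or_pos with rfl | hn
  · simpa using Real.log_nonneg (one_le_topStat Φ)
  · rwa [div_le_iff₀ (by exact_mod_cast hn), mul_comm]

lemma Real.mul_log_le_mul_log_of_le {x y : ℝ} (hx : 0 ≤ x) (hxy : x ≤ y) :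
    x * Real.log x ≤ x * Real.log y := by
  rcases hx.eq_or_lt with rfl | hx
  · simp
  · exact mul_le_mul_of_nonneg_left (Real.log_le_log hx hxy) hx.le

lemma Real.negMulLog_add_mul_log_le {a s S : ℝ} (ha : 0 ≤ a) (has : a ≤ s) (hS : 0 < S) :
    Real.negMulLog a + a * Real.log s ≤ s / S - a + a * Real.log S := by
  rcases ha.eq_or_lt with rfl | ha
  · simpa using div_nonneg has hS.le
  have hs : 0 < s := ha.trans_le has
  have key := Real.log_le_sub_one_of_pos (div_pos hs (mul_pos ha hS))
  rw [Real.log_div hs.ne' (mul_pos ha hS).ne', Real.log_mul ha.ne' hS.ne'] at key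
  have hlin : a * (s / (a * S) - 1) = s / S - a := by field_simp
  rw [Real.negMulLog, neg_mul]
  nlinarith [mul_le_mul_of_nonneg_left key ha.le]

-- Gibbs' inequality: `∑ aᵢ log (sᵢ / aᵢ) ≤ log ∑ sᵢ` for a probability vector `a`.
lemma Real.sum_negMulLog_add_mul_log_le_log_sum {ι : Type*} [Fintype ι] {a s : ι → ℝ}
    (ha : ∀ i, 0 ≤ a i) (ha_sum : ∑ i, a i = 1) (has : ∀ i, a i ≤ s i) :
    ∑ i, (Real.negMulLog (a i) + a i * Real.log (s i)) ≤ Real.log (∑ i, s i) := by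
  have hS : 0 < ∑ i, s i := one_pos.trans_le (ha_sum ▸ Finset.sum_le_sum fun i _ => has i)
  calc ∑ i, (Real.negMulLog (a i) + a i * Real.log (s i))
      ≤ ∑ i, (s i / ∑ j, s j - a i + a i * Real.log (∑ j, s j)) :=
        Finset.sum_le_sum fun i _ => Real.negMulLog_add_mul_log_le (ha i) (has i) hS
    _ = Real.log (∑ i, s i) := by
        rw [Finset.sum_add_distrib, Finset.sum_sub_distrib, ← Finset.sum_div, ← Finset.sum_mul,
          ha_sum, div_self hS.ne']
        ring

namespace PartUnity.Meas

variable [MeasurableSpace X] {Φ : PartUnity X} (μ : Measure X)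

lemma integrable (hΦ : Φ.Meas) [IsFiniteMeasure μ] (i : Fin Φ.n) : Integrable (Φ.f i) μ :=
  .of_bound (hΦ i).aestronglyMeasurable 1 <| ae_of_all _ fun x => by
    rw [Real.norm_eq_abs, abs_of_nonneg (Φ.nonneg i x)]
    exact Φ.le_one i x

lemma integrable_mul_log (hΦ : Φ.Meas) [IsFiniteMeasure μ] (i : Fin Φ.n) :
    Integrable (fun x => Φ.f i x * Real.log (Φ.f i x)) μ :=
  .of_bound ((hΦ i).mul (hΦ i).log).aestronglyMeasurable 1 <| ae_of_all _ fun x => by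
    rw [Real.norm_eq_abs, abs_le]
    constructor
    · linarith [Real.self_sub_one_le_mul_log (Φ.nonneg i x), Φ.nonneg i x]
    · exact (Real.mul_log_nonpos (Φ.nonneg i x) (Φ.le_one i x)).trans zero_le_one

variable [IsProbabilityMeasure μ]

lemma sum_integral_eq_one (hΦ : Φ.Meas) : ∑ i, ∫ x, Φ.f i x ∂μ = 1 := by
  rw [← integral_finsetSum _ fun i _ => hΦ.integrable μ i]
  simp [Φ.sum_one]

lemma integral_le_iSup (hΦ : Φ.Meas) (i : Fin Φ.n) : ∫ x, Φ.f i x ∂μ ≤ ⨆ x, Φ.f i x := by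
  simpa using integral_mono (hΦ.integrable μ i) (integrable_const _) (Φ.f_le_iSup i)

lemma integral_mul_log_le (hΦ : Φ.Meas) (i : Fin Φ.n) :
    ∫ x, Φ.f i x * Real.log (Φ.f i x) ∂μ ≤ (∫ x, Φ.f i x ∂μ) * Real.log (⨆ x, Φ.f i x) := by
  rw [← integral_mul_const]
  exact integral_mono (hΦ.integrable_mul_log μ i) ((hΦ.integrable μ i).mul_const _)
    fun x => Real.mul_log_le_mul_log_of_le (Φ.nonneg i x) (Φ.f_le_iSup i x)

lemma mul_log_integral_le (hΦ : Φ.Meas) (i : Fin Φ.n) :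
    (∫ x, Φ.f i x ∂μ) * Real.log (∫ x, Φ.f i x ∂μ) ≤ ∫ x, Φ.f i x * Real.log (Φ.f i x) ∂μ :=
  Real.convexOn_mul_log.map_integral_le Real.continuous_mul_log.continuousOn isClosed_Ici
    (ae_of_all _ (Φ.nonneg i)) (hΦ.integrable μ i) (hΦ.integrable_mul_log μ i)

lemma statEnt_nonneg (hΦ : Φ.Meas) : 0 ≤ statEnt μ Φ :=
  Finset.sum_nonneg fun i _ => by linarith [hΦ.mul_log_integral_le μ i]

lemma statEnt_le_log_topStat (hΦ : Φ.Meas) : statEnt μ Φ ≤ Real.log (topStat Φ) :=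
  calc statEnt μ Φ
      ≤ ∑ i, (Real.negMulLog (∫ x, Φ.f i x ∂μ)
          + (∫ x, Φ.f i x ∂μ) * Real.log (⨆ x, Φ.f i x)) := by
        refine Finset.sum_le_sum fun i _ => ?_
        rw [Real.negMulLog, neg_mul]
        exact add_le_add_right (hΦ.integral_mul_log_le μ i) _
    _ ≤ Real.log (topStat Φ) :=
        Real.sum_negMulLog_add_mul_log_le_log_sum (fun i => integral_nonneg (Φ.nonneg i))
          (hΦ.sum_integral_eq_one μ) (hΦ.integral_le_iSup μ)

end PartUnity.Meas

lemma locEnt_le_topLocEnt [MeasurableSpace X] {T : X → X} (hT : Measurable T)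
    {Φ : PartUnity X} (hΦ : Φ.Meas) (μ : Measure X) [IsProbabilityMeasure μ] :
    locEnt T μ Φ ≤ topLocEnt T Φ := by
  have := nonempty_of_isProbabilityMeasure μ
  refine limsup_le_limsup (Eventually.of_forall fun n => ?_)
    (isCoboundedUnder_le_of_le atTop (x := 0) fun n => ?_)
    (isBoundedUnder_of ⟨_, log_topStat_dyn_div_le T Φ⟩)
  · exact div_le_div_of_nonneg_right ((hΦ.dyn hT n).statEnt_le_log_topStat μ) n.cast_nonneg
  · exact div_nonneg ((hΦ.dyn hT n).statEnt_nonneg μ) n.cast_nonneg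

lemma metEnt_le_topEnt [TopologicalSpace X] [MeasurableSpace X] [OpensMeasurableSpace X]
    {T : X → X} (hT : Measurable T) (μ : Measure X) [IsProbabilityMeasure μ] :
    metEnt T μ ≤ topEnt T :=
  iSup_mono fun Φ => EReal.coe_le_coe (locEnt_le_topLocEnt hT Φ.2.meas μ)

/-- `H̃_μ(Φ) ≤ log H̃(Φ)`; consequently `h̃_μ(T,Φ) ≤ h̃(T,Φ)` and
`h̃_μ(T) ≤ h̃_top(T)`. -/
theorem statEnt_le_log_topStat {X : Type*} [MetricSpace X]
    [MeasurableSpace X] [BorelSpace X]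
    (T : X → X) (hT : Continuous T)
    (μ : Measure X) [IsProbabilityMeasure μ]
    (Φ : PartUnity X) (hΦ : Φ.Cont) :
    statEnt μ Φ ≤ Real.log (topStat Φ) ∧
    locEnt T μ Φ ≤ topLocEnt T Φ ∧
    metEnt T μ ≤ topEnt T :=
  ⟨hΦ.meas.statEnt_le_log_topStat μ, locEnt_le_topLocEnt hT.measurable hΦ.meas μ,
    metEnt_le_topEnt hT.measurable μ⟩
end
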